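/- Let m ≥ 1 be an integer, g, Δ, ε real, λ := 2m + 1 − g² − ε, and μ := (λ+g²)² − 4g²(λ+g²) − Δ². Consider the spherical principal series action ϖ_{1,a} with a = −2m, and let K̃ be the operator (½H − E + (−1 − m))∘(F + 4g²) + (−½ − m + ε)(H − ½) + (μ − 4εg² − ε²) on V, and Λ̃ := 4g²(a/2 − 1 − m) + (−½ − m + ε)(a − ½). Then for every finitely supported family (d_n)_{n∈ℤ} of complex numbers with d_n = 0 whenever |n| > m, the vector ν = Σ_n d_n e_n satisfies K̃ν = Λ̃ν if and only if for every n ∈ ℤ: (m+n+1)(m−n+1)·d_{n+1} + [(m−n+1)² − 4g²(m−n+1) − Δ² − 2ε(m−n+1)]·d_n + 4g²(m−n+1)·d_{n−1} = 0. -/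

import Mathlib

/-- The space `V` of finitely supported functions `ℤ → ℂ`. -/
abbrev Vsl2 : Type := ℤ →₀ ℂ

/-- The standard basis vectors `e n` of `V`. -/
noncomputable def eV (n : ℤ) : Vsl2 := Finsupp.single n 1

/-- The operator `H` of the spherical principal series `ϖ_{1,a}`: `H e_n = 2n·e_n`. -/
noncomputable def Hsph : Vsl2 →ₗ[ℂ] Vsl2 :=
  Finsupp.lsum ℂ fun n => (2 * (n : ℂ)) • Finsupp.lsingle n

/-- The operator `E` of the spherical principal series `ϖ_{1,a}`: `E e_n = (n + a/2)·e_{n+1}`. -/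
noncomputable def Esph (a : ℂ) : Vsl2 →ₗ[ℂ] Vsl2 :=
  Finsupp.lsum ℂ fun n => ((n : ℂ) + a / 2) • Finsupp.lsingle (n + 1)

/-- The operator `F` of the spherical principal series `ϖ_{1,a}`: `F e_n = (−n + a/2)·e_{n−1}`. -/
noncomputable def Fsph (a : ℂ) : Vsl2 →ₗ[ℂ] Vsl2 :=
  Finsupp.lsum ℂ fun n => (-(n : ℂ) + a / 2) • Finsupp.lsingle (n - 1)

/-- The operator `H` of the non-spherical principal series `ϖ_{2,a}`: `H e_n = (2n+1)·e_n`. -/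
noncomputable def Hnsph : Vsl2 →ₗ[ℂ] Vsl2 :=
  Finsupp.lsum ℂ fun n => (2 * (n : ℂ) + 1) • Finsupp.lsingle n

/-- The operator `E` of the non-spherical principal series `ϖ_{2,a}`:
`E e_n = (n + (a+1)/2)·e_{n+1}`. -/
noncomputable def Ensph (a : ℂ) : Vsl2 →ₗ[ℂ] Vsl2 :=
  Finsupp.lsum ℂ fun n => ((n : ℂ) + (a + 1) / 2) • Finsupp.lsingle (n + 1)

/-- The operator `F` of the non-spherical principal series `ϖ_{2,a}`:
`F e_n = (−n + (a−1)/2)·e_{n−1}`. -/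
noncomputable def Fnsph (a : ℂ) : Vsl2 →ₗ[ℂ] Vsl2 :=
  Finsupp.lsum ℂ fun n => (-(n : ℂ) + (a - 1) / 2) • Finsupp.lsingle (n - 1)

/-- The operator `(½H − E + α)∘(F + β) + γ(H − ½) + C` built from operators `Hop`, `Eop`,
`Fop` on `V`, scalars acting as scalar multiples of the identity. -/
noncomputable def Kop (Hop Eop Fop : Vsl2 →ₗ[ℂ] Vsl2) (α β γ C : ℂ) : Vsl2 →ₗ[ℂ] Vsl2 :=
  ((1 / 2 : ℂ) • Hop - Eop + α • LinearMap.id) ∘ₗ (Fop + β • LinearMap.id) +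
    γ • (Hop - (1 / 2 : ℂ) • LinearMap.id) + C • LinearMap.id

theorem Finsupp.lsum_smul_lsingle_equiv_apply {R M ι κ : Type*} [CommSemiring R]
    [AddCommMonoid M] [Module R M] (e : ι ≃ κ) (c : ι → R) (v : ι →₀ M) (j : κ) :
    (Finsupp.lsum R fun i => c i • Finsupp.lsingle (e i) : (ι →₀ M) →ₗ[R] κ →₀ M) v j =
      c (e.symm j) • v (e.symm j) := by
  classical
  simp only [Finsupp.lsum_apply, Finsupp.sum_apply, LinearMap.smul_apply,
    Finsupp.lsingle_apply, Finsupp.smul_single, Finsupp.single_apply,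
    ← Equiv.eq_symm_apply]
  rw [Finsupp.sum_ite_eq' v (e.symm j) fun i x => c i • x]
  split_ifs with h
  · rfl
  · rw [Finsupp.notMem_support_iff.mp h, smul_zero]

theorem Hsph_apply (v : Vsl2) (k : ℤ) : Hsph v k = 2 * k * v k :=
  Finsupp.lsum_smul_lsingle_equiv_apply (Equiv.refl ℤ) (fun n : ℤ => 2 * (n : ℂ)) v k

theorem Esph_apply (a : ℂ) (v : Vsl2) (k : ℤ) :
    Esph a v k = ((k - 1 : ℤ) + a / 2) * v (k - 1) :=
  Finsupp.lsum_smul_lsingle_equiv_apply (Equiv.addRight 1) (fun n : ℤ => (n : ℂ) + a / 2) v k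

theorem Fsph_apply (a : ℂ) (v : Vsl2) (k : ℤ) :
    Fsph a v k = (-(k + 1 : ℤ) + a / 2) * v (k + 1) :=
  Finsupp.lsum_smul_lsingle_equiv_apply (Equiv.subRight 1) (fun n : ℤ => -(n : ℂ) + a / 2) v k

theorem Kop_sph_apply (a α β γ C : ℂ) (v : Vsl2) (k : ℤ) :
    Kop Hsph (Esph a) (Fsph a) α β γ C v k =
      (k + α) * ((-(k + 1) + a / 2) * v (k + 1) + β * v k)
      - (k - 1 + a / 2) * ((-k + a / 2) * v k + β * v (k - 1))
      + γ * (2 * k - 1 / 2) * v k + C * v k := by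
  simp only [Kop, LinearMap.add_apply, LinearMap.comp_apply, LinearMap.sub_apply,
    LinearMap.smul_apply, LinearMap.id_apply, Hsph_apply, Esph_apply, Fsph_apply,
    Finsupp.add_apply, Finsupp.sub_apply, Finsupp.smul_apply, smul_eq_mul, sub_add_cancel]
  push_cast
  ring

theorem spherical_Ktilde_eigenproblem_general (m : ℤ) (g Δ ε : ℝ)
    (lam : ℝ) (hlam : lam = 2 * m + 1 - g ^ 2 - ε)
    (μ : ℝ) (hμ : μ = (lam + g ^ 2) ^ 2 - 4 * g ^ 2 * (lam + g ^ 2) - Δ ^ 2)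
    (a : ℝ) (ha : a = -2 * m)
    (Kt : Vsl2 →ₗ[ℂ] Vsl2)
    (hKt : Kt = Kop Hsph (Esph (a : ℂ)) (Fsph (a : ℂ))
      (-1 - (m : ℂ)) ((4 * g ^ 2 : ℝ) : ℂ) ((-(1 / 2) - (m : ℝ) + ε : ℝ) : ℂ)
      ((μ - 4 * ε * g ^ 2 - ε ^ 2 : ℝ) : ℂ))
    (Λt : ℝ) (hΛt : Λt = 4 * g ^ 2 * (a / 2 - 1 - m) + (-(1 / 2) - m + ε) * (a - 1 / 2))
    (ν : Vsl2) :
    Kt ν = (Λt : ℂ) • ν ↔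
      ∀ n : ℤ,
        ((m : ℂ) + n + 1) * ((m : ℂ) - n + 1) * ν (n + 1) +
          (((m : ℂ) - n + 1) ^ 2 - 4 * (g : ℂ) ^ 2 * ((m : ℂ) - n + 1) - (Δ : ℂ) ^ 2 -
            2 * (ε : ℂ) * ((m : ℂ) - n + 1)) * ν n +
          4 * (g : ℂ) ^ 2 * ((m : ℂ) - n + 1) * ν (n - 1) = 0 := by
  subst hKt hΛt hμ hlam ha
  rw [← sub_eq_zero, Finsupp.ext_iff]
  refine forall_congr' fun n => ?_
  rw [Finsupp.sub_apply, Finsupp.smul_apply, smul_eq_mul, Kop_sph_apply, Finsupp.zero_apply]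
  push_cast
  -- coordinate `n` of `K̃ν - Λ̃ν` is exactly the `n`-th line of the recurrence
  constructor <;> intro h <;> linear_combination h

/-- Spherical `ϖ_{1,−2m}`-eigenproblem for `K̃` on `F_{2m+1}` (the case `λ = 2m + 1 − g² − ε`):
the eigenvalue equation `K̃ν = Λ̃ν` for `ν = Σ d_n e_n` supported in `|n| ≤ m` is equivalent
to the three-term recurrence
`(m+n+1)(m−n+1)d_{n+1} + [(m−n+1)² − 4g²(m−n+1) − Δ² − 2ε(m−n+1)]d_n + 4g²(m−n+1)d_{n−1} = 0`. -/
theorem spherical_Ktilde_eigenproblem (m : ℤ) (hm : 1 ≤ m) (g Δ ε : ℝ)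
    (lam : ℝ) (hlam : lam = 2 * m + 1 - g ^ 2 - ε)
    (μ : ℝ) (hμ : μ = (lam + g ^ 2) ^ 2 - 4 * g ^ 2 * (lam + g ^ 2) - Δ ^ 2)
    (a : ℝ) (ha : a = -2 * m)
    (Kt : Vsl2 →ₗ[ℂ] Vsl2)
    (hKt : Kt = Kop Hsph (Esph (a : ℂ)) (Fsph (a : ℂ))
      (-1 - (m : ℂ)) ((4 * g ^ 2 : ℝ) : ℂ) ((-(1 / 2) - (m : ℝ) + ε : ℝ) : ℂ)
      ((μ - 4 * ε * g ^ 2 - ε ^ 2 : ℝ) : ℂ))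
    (Λt : ℝ) (hΛt : Λt = 4 * g ^ 2 * (a / 2 - 1 - m) + (-(1 / 2) - m + ε) * (a - 1 / 2))
    (ν : Vsl2) (hsupp : ∀ n : ℤ, m < |n| → ν n = 0) :
    Kt ν = (Λt : ℂ) • ν ↔
      ∀ n : ℤ,
        ((m : ℂ) + n + 1) * ((m : ℂ) - n + 1) * ν (n + 1) +
          (((m : ℂ) - n + 1) ^ 2 - 4 * (g : ℂ) ^ 2 * ((m : ℂ) - n + 1) - (Δ : ℂ) ^ 2 -
            2 * (ε : ℂ) * ((m : ℂ) - n + 1)) * ν n +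
          4 * (g : ℂ) ^ 2 * ((m : ℂ) - n + 1) * ν (n - 1) = 0 :=
  spherical_Ktilde_eigenproblem_general m g Δ ε lam hlam μ hμ a ha Kt hKt Λt hΛt ν
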